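/- Let (X, Y) be a random pair with X ∈ M_{m,T}(ℝ), Y ∈ ℝ. Suppose E[(Y − E(Y|X))² | X] ≤ b₂² a.s., |E(Y|X)| ≤ b∞ a.s., and for two matrices A, A* we have |⟨X, A⟩| ≤ C and |⟨X, A*⟩| ≤ C almost surely. Let L = (Y − ⟨X,A⟩)² − (Y − ⟨X,A*⟩)². Then E[L²] ≤ 4(b₂² + (b∞ + C)²) · E[⟨X, A − A*⟩²]. -/

import Mathlib

/-!
Write `g = E[Y | X]`, `D = ⟨X, A - A*⟩` and `h = 2g - ⟨X, A⟩ - ⟨X, A*⟩`, so that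
`L = -D (2 (Y - g) + h)` and `L² = 4 D² (Y - g)² + 4 D² h (Y - g) + D² h²`.
Since `D` and `h` are bounded and `X`-measurable, conditioning on `X` turns the first term into
`4 D² Var(Y | X) ≤ 4 b₂² D²` and kills the cross term, as `E[Y - g | X] = 0`;
the last term is at most `4 (b∞ + C)² D²` because `|h| ≤ 2 (b∞ + C)`.
-/

open Matrix MeasureTheory ProbabilityTheory

section CondExp

variable {Ω : Type*} {m mΩ : MeasurableSpace Ω} {μ : Measure Ω}

theorem ae_norm_sq_le_of_abs_le {f : Ω → ℝ} {c : ℝ} (hf : ∀ᵐ ω ∂μ, |f ω| ≤ c) :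
    ∀ᵐ ω ∂μ, ‖f ω ^ 2‖ ≤ c ^ 2 := by
  filter_upwards [hf] with ω hω
  rw [norm_pow, Real.norm_eq_abs]
  exact pow_le_pow_left₀ (abs_nonneg _) hω 2

variable [IsFiniteMeasure μ]

theorem integral_mul_eq_integral_mul_condExp (hm : m ≤ mΩ) {Z F : Ω → ℝ} {c : ℝ}
    (hZ : StronglyMeasurable[m] Z) (hZc : ∀ᵐ ω ∂μ, ‖Z ω‖ ≤ c) (hF : Integrable F μ) :
    ∫ ω, Z ω * F ω ∂μ = ∫ ω, Z ω * μ[F | m] ω ∂μ := by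
  rw [← integral_condExp hm]
  exact integral_congr_ae (condExp_stronglyMeasurable_mul_of_bound hm hZ hF c hZc)

theorem condExp_sub_condExp_ae_eq_zero (hm : m ≤ mΩ) {Y : Ω → ℝ} (hY : Integrable Y μ) :
    μ[Y - μ[Y | m] | m] =ᵐ[μ] 0 := by
  refine (condExp_sub hY integrable_condExp m).trans ?_
  rw [condExp_of_stronglyMeasurable hm stronglyMeasurable_condExp integrable_condExp, sub_self]

theorem integral_mul_sq_sub_condExp_le (hm : m ≤ mΩ) {Y Z : Ω → ℝ} {v c : ℝ}
    (hY : MemLp Y 2 μ) (hvar : ∀ᵐ ω ∂μ, Var[Y; μ | m] ω ≤ v)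
    (hZ : StronglyMeasurable[m] Z) (hZ₀ : ∀ᵐ ω ∂μ, 0 ≤ Z ω) (hZc : ∀ᵐ ω ∂μ, ‖Z ω‖ ≤ c) :
    ∫ ω, Z ω * (Y ω - μ[Y | m] ω) ^ 2 ∂μ ≤ v * ∫ ω, Z ω ∂μ := by
  have hZ' : AEStronglyMeasurable Z μ := (hZ.mono hm).aestronglyMeasurable
  calc ∫ ω, Z ω * (Y ω - μ[Y | m] ω) ^ 2 ∂μ = ∫ ω, Z ω * Var[Y; μ | m] ω ∂μ :=
        integral_mul_eq_integral_mul_condExp hm hZ hZc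
          (hY.sub (hY.condExp one_le_two)).integrable_sq
    _ ≤ ∫ ω, v * Z ω ∂μ := by
        refine integral_mono_ae (integrable_condVar.bdd_mul hZ' hZc)
          ((Integrable.of_bound hZ' c hZc).const_mul v) ?_
        filter_upwards [hvar, hZ₀] with ω hω hω₀
        rw [mul_comm v]
        exact mul_le_mul_of_nonneg_left hω hω₀
    _ = v * ∫ ω, Z ω ∂μ := integral_const_mul v _

theorem integral_mul_sub_condExp_eq_zero (hm : m ≤ mΩ) {Y Z : Ω → ℝ} {c : ℝ}
    (hY : Integrable Y μ) (hZ : StronglyMeasurable[m] Z) (hZc : ∀ᵐ ω ∂μ, ‖Z ω‖ ≤ c) :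
    ∫ ω, Z ω * (Y ω - μ[Y | m] ω) ∂μ = 0 :=
  calc ∫ ω, Z ω * (Y ω - μ[Y | m] ω) ∂μ = ∫ ω, Z ω * μ[Y - μ[Y | m] | m] ω ∂μ :=
        integral_mul_eq_integral_mul_condExp hm hZ hZc (hY.sub integrable_condExp)
    _ = 0 := by
        refine integral_eq_zero_of_ae ?_
        filter_upwards [condExp_sub_condExp_ae_eq_zero hm hY] with ω hω
        rw [hω, Pi.zero_apply, mul_zero]

theorem integral_sq_mul_sq_two_mul_sub_condExp_add_le (hm : m ≤ mΩ) {Y D h : Ω → ℝ}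
    {v cD ch : ℝ} (hY : MemLp Y 2 μ) (hvar : ∀ᵐ ω ∂μ, Var[Y; μ | m] ω ≤ v)
    (hD : StronglyMeasurable[m] D) (hDc : ∀ᵐ ω ∂μ, |D ω| ≤ cD)
    (hh : StronglyMeasurable[m] h) (hhc : ∀ᵐ ω ∂μ, |h ω| ≤ ch) :
    ∫ ω, D ω ^ 2 * (2 * (Y ω - μ[Y | m] ω) + h ω) ^ 2 ∂μ ≤
      (4 * v + ch ^ 2) * ∫ ω, D ω ^ 2 ∂μ := by
  have hW : MemLp (Y - μ[Y | m]) 2 μ := hY.sub (hY.condExp one_le_two)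
  have hD2 := ae_norm_sq_le_of_abs_le hDc
  have hh2 := ae_norm_sq_le_of_abs_le hhc
  have hD2h : ∀ᵐ ω ∂μ, ‖D ω ^ 2 * h ω‖ ≤ cD ^ 2 * ch := by
    filter_upwards [hD2, hhc] with ω h1 h2
    rw [norm_mul, Real.norm_eq_abs (h ω)]
    exact mul_le_mul h1 h2 (abs_nonneg _) ((norm_nonneg _).trans h1)
  have hD2m : StronglyMeasurable[m] fun ω => D ω ^ 2 := hD.pow 2
  have hD2hm : StronglyMeasurable[m] fun ω => D ω ^ 2 * h ω := hD2m.mul hh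
  have hD2i : Integrable (fun ω => D ω ^ 2) μ :=
    .of_bound (hD2m.mono hm).aestronglyMeasurable _ hD2
  have hvarTerm : ∫ ω, D ω ^ 2 * (Y ω - μ[Y | m] ω) ^ 2 ∂μ ≤ v * ∫ ω, D ω ^ 2 ∂μ :=
    integral_mul_sq_sub_condExp_le hm hY hvar hD2m (.of_forall fun _ => sq_nonneg _) hD2
  have hcrossTerm : ∫ ω, D ω ^ 2 * h ω * (Y ω - μ[Y | m] ω) ∂μ = 0 :=
    integral_mul_sub_condExp_eq_zero hm (hY.integrable one_le_two) hD2hm hD2h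
  have hvarInt : Integrable (fun ω => D ω ^ 2 * (Y ω - μ[Y | m] ω) ^ 2) μ :=
    hW.integrable_sq.bdd_mul (hD2m.mono hm).aestronglyMeasurable hD2
  have hcrossInt : Integrable (fun ω => D ω ^ 2 * h ω * (Y ω - μ[Y | m] ω)) μ :=
    (hW.integrable one_le_two).bdd_mul (hD2hm.mono hm).aestronglyMeasurable hD2h
  have hbiasInt : Integrable (fun ω => D ω ^ 2 * h ω ^ 2) μ :=
    hD2i.mul_bdd ((hh.pow 2).mono hm).aestronglyMeasurable hh2
  have hbiasTerm : ∫ ω, D ω ^ 2 * h ω ^ 2 ∂μ ≤ ∫ ω, D ω ^ 2 * ch ^ 2 ∂μ := by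
    refine integral_mono_ae hbiasInt (hD2i.mul_const _) ?_
    filter_upwards [hh2] with ω hω
    exact mul_le_mul_of_nonneg_left ((le_abs_self _).trans hω) (sq_nonneg _)
  calc ∫ ω, D ω ^ 2 * (2 * (Y ω - μ[Y | m] ω) + h ω) ^ 2 ∂μ
      = ∫ ω, (4 * (D ω ^ 2 * (Y ω - μ[Y | m] ω) ^ 2) + 4 * (D ω ^ 2 * h ω * (Y ω - μ[Y | m] ω))
          + D ω ^ 2 * h ω ^ 2) ∂μ := by
        congr 1 with ω
        ring
    _ = 4 * ∫ ω, D ω ^ 2 * (Y ω - μ[Y | m] ω) ^ 2 ∂μ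
          + 4 * ∫ ω, D ω ^ 2 * h ω * (Y ω - μ[Y | m] ω) ∂μ + ∫ ω, D ω ^ 2 * h ω ^ 2 ∂μ := by
        rw [integral_add ?_ hbiasInt, integral_add (hvarInt.const_mul 4) (hcrossInt.const_mul 4),
          integral_const_mul, integral_const_mul]
        exact (hvarInt.const_mul 4).add (hcrossInt.const_mul 4)
    _ ≤ 4 * (v * ∫ ω, D ω ^ 2 ∂μ) + 4 * 0 + ∫ ω, D ω ^ 2 * ch ^ 2 ∂μ := by
        rw [hcrossTerm]
        gcongr
    _ = (4 * v + ch ^ 2) * ∫ ω, D ω ^ 2 ∂μ := by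
        rw [integral_mul_const]
        ring

theorem integral_sq_sub_sq_sq_le (hm : m ≤ mΩ) {Y a b : Ω → ℝ} {v binf C : ℝ}
    (hY : MemLp Y 2 μ) (hvar : ∀ᵐ ω ∂μ, Var[Y; μ | m] ω ≤ v)
    (hcondExp : ∀ᵐ ω ∂μ, |μ[Y | m] ω| ≤ binf)
    (ha : StronglyMeasurable[m] a) (haC : ∀ᵐ ω ∂μ, |a ω| ≤ C)
    (hb : StronglyMeasurable[m] b) (hbC : ∀ᵐ ω ∂μ, |b ω| ≤ C) :
    ∫ ω, ((Y ω - a ω) ^ 2 - (Y ω - b ω) ^ 2) ^ 2 ∂μ ≤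
      4 * (v + (binf + C) ^ 2) * ∫ ω, (a ω - b ω) ^ 2 ∂μ := by
  have hD : ∀ᵐ ω ∂μ, |a ω - b ω| ≤ 2 * C := by
    filter_upwards [haC, hbC] with ω h₁ h₂
    rw [abs_le] at *
    constructor <;> linarith
  have hh : ∀ᵐ ω ∂μ, |2 * μ[Y | m] ω - a ω - b ω| ≤ 2 * (binf + C) := by
    filter_upwards [hcondExp, haC, hbC] with ω h₀ h₁ h₂
    rw [abs_le] at *
    constructor <;> linarith
  have hloss : ∀ ω, ((Y ω - a ω) ^ 2 - (Y ω - b ω) ^ 2) ^ 2 =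
      (a ω - b ω) ^ 2 * (2 * (Y ω - μ[Y | m] ω) + (2 * μ[Y | m] ω - a ω - b ω)) ^ 2 := by
    intro ω
    ring
  simp_rw [hloss]
  refine (integral_sq_mul_sq_two_mul_sub_condExp_add_le (D := fun ω => a ω - b ω) hm hY hvar
    (ha.sub hb) hD (((stronglyMeasurable_condExp.const_mul 2).sub ha).sub hb) hh).trans_eq ?_
  ring

end CondExp

theorem Matrix.measurable_trace_transpose_mul {ι κ : Type*} [Fintype ι] [Fintype κ]
    (B : Matrix ι κ ℝ) :
    Measurable[MeasurableSpace.pi] fun M : Matrix ι κ ℝ => (Mᵀ * B).trace := by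
  simp only [Matrix.trace, Matrix.diag, Matrix.mul_apply, Matrix.transpose_apply]
  fun_prop

theorem stmt11_general {m T : ℕ}
    {Ω : Type*} [MeasurableSpace Ω] (μ : Measure Ω) [IsProbabilityMeasure μ]
    (X : Ω → Matrix (Fin m) (Fin T) ℝ) (hX : ∀ p q, Measurable fun ω => X ω p q)
    (Y : Ω → ℝ) (hY : MemLp Y 2 μ)
    (b₂ binf C : ℝ)
    (A Astar : Matrix (Fin m) (Fin T) ℝ)
    -- conditional variance bound: E[(Y - E(Y|X))² | X] ≤ b₂² a.s.
    (hcondvar : ∀ᵐ ω ∂μ,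
      condExp (MeasurableSpace.comap X MeasurableSpace.pi) μ
        (fun ω' => (Y ω' - condExp (MeasurableSpace.comap X MeasurableSpace.pi) μ Y ω') ^ 2)
        ω ≤ b₂ ^ 2)
    -- |E(Y|X)| ≤ b∞ a.s.
    (hcondbound : ∀ᵐ ω ∂μ,
      |condExp (MeasurableSpace.comap X MeasurableSpace.pi) μ Y ω| ≤ binf)
    (hA : ∀ᵐ ω ∂μ, |((X ω)ᵀ * A).trace| ≤ C)
    (hAstar : ∀ᵐ ω ∂μ, |((X ω)ᵀ * Astar).trace| ≤ C) :
    ∫ ω, ((Y ω - ((X ω)ᵀ * A).trace) ^ 2 - (Y ω - ((X ω)ᵀ * Astar).trace) ^ 2) ^ 2 ∂μ ≤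
      4 * (b₂ ^ 2 + (binf + C) ^ 2) * ∫ ω, ((X ω)ᵀ * (A - Astar)).trace ^ 2 ∂μ := by
  have hXm : Measurable[_, MeasurableSpace.pi] X :=
    measurable_pi_iff.mpr fun p => measurable_pi_iff.mpr fun q => hX p q
  have hpred : ∀ B, StronglyMeasurable[MeasurableSpace.comap X MeasurableSpace.pi]
      fun ω => ((X ω)ᵀ * B).trace :=
    fun B => ((measurable_trace_transpose_mul B).comp (comap_measurable X)).stronglyMeasurable
  simp_rw [Matrix.mul_sub, Matrix.trace_sub]
  exact integral_sq_sub_sq_sq_le hXm.comap_le hY hcondvar hcondbound (hpred A) hA (hpred Astar)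
    hAstar

theorem stmt11 {m T : ℕ}
    {Ω : Type*} [MeasurableSpace Ω] (μ : Measure Ω) [IsProbabilityMeasure μ]
    (X : Ω → Matrix (Fin m) (Fin T) ℝ) (hX : ∀ p q, Measurable fun ω => X ω p q)
    (Y : Ω → ℝ) (hY : MemLp Y 2 μ)
    (b₂ binf C : ℝ) (hb₂ : 0 < b₂) (hbinf : 0 < binf) (hC : 0 < C)
    (A Astar : Matrix (Fin m) (Fin T) ℝ)
    -- conditional variance bound: E[(Y - E(Y|X))² | X] ≤ b₂² a.s.
    (hcondvar : ∀ᵐ ω ∂μ,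
      condExp (MeasurableSpace.comap X MeasurableSpace.pi) μ
        (fun ω' => (Y ω' - condExp (MeasurableSpace.comap X MeasurableSpace.pi) μ Y ω') ^ 2)
        ω ≤ b₂ ^ 2)
    -- |E(Y|X)| ≤ b∞ a.s.
    (hcondbound : ∀ᵐ ω ∂μ,
      |condExp (MeasurableSpace.comap X MeasurableSpace.pi) μ Y ω| ≤ binf)
    (hA : ∀ᵐ ω ∂μ, |((X ω)ᵀ * A).trace| ≤ C)
    (hAstar : ∀ᵐ ω ∂μ, |((X ω)ᵀ * Astar).trace| ≤ C) :
    ∫ ω, ((Y ω - ((X ω)ᵀ * A).trace) ^ 2 - (Y ω - ((X ω)ᵀ * Astar).trace) ^ 2) ^ 2 ∂μ ≤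
      4 * (b₂ ^ 2 + (binf + C) ^ 2) * ∫ ω, ((X ω)ᵀ * (A - Astar)).trace ^ 2 ∂μ :=
  stmt11_general μ X hX Y hY b₂ binf C A Astar hcondvar hcondbound hA hAstar
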